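/- arXiv:2511.20786 — 2 statements merged into one kernel-verified Lean document; each statement's English description precedes it below -/
import Mathlib

section
/- Let X be a standard Borel space and T : X → X a Borel bijection. Then there exists a Borel subset A of the support of T (the set of points x with T(x) ≠ x) such that supp T = A ⊔ (T(A) ∪ T⁻¹(A)), i.e., A is disjoint from T(A) ∪ T⁻¹(A) and together they cover supp T. -/
/-!
Fix a countable family of Borel sets `Bₙ` separating points in the ordered sense: for `x ≠ y`
some `Bₙ` contains `x` but not `y`. Then `supp T` is covered by the Borel sets
`Dₙ = Bₙ \ T⁻¹(Bₙ)`, and no `Dₙ` contains both a point and its image. Choosing greedily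
`Aₙ = Dₙ \ ⋃_{k<n} (A_k ∪ T(A_k) ∪ T⁻¹(A_k))`, the union `A = ⋃ₙ Aₙ` contains no pair `x, T x`
and is maximal with this property inside `⋃ₙ Dₙ = supp T`, which is the separator.
-/

open MeasureTheory Set

section

variable {X : Type*}

section Greedy

variable (T : X → X) (D : ℕ → Set X)

def greedyPiece (n : ℕ) : Set X :=
  D n \ ⋃ k : Fin n, (greedyPiece k ∪ (T '' greedyPiece k ∪ T ⁻¹' greedyPiece k))
termination_by n
decreasing_by exact k.isLt

def greedySeparator : Set X :=
  ⋃ n, greedyPiece T D n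

variable {T D}

theorem greedyPiece_subset (n : ℕ) : greedyPiece T D n ⊆ D n := by
  rw [greedyPiece]
  exact sdiff_subset

theorem disjoint_greedyPiece_of_lt {k n : ℕ} (hkn : k < n) :
    Disjoint (greedyPiece T D n)
      (greedyPiece T D k ∪ (T '' greedyPiece T D k ∪ T ⁻¹' greedyPiece T D k)) := by
  rw [greedyPiece]
  exact disjoint_sdiff_left.mono_right (subset_iUnion_of_subset ⟨k, hkn⟩ subset_rfl)

theorem greedySeparator_subset : greedySeparator T D ⊆ ⋃ n, D n :=
  iUnion_mono greedyPiece_subset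

theorem apply_notMem_greedySeparator (hD : ∀ n, ∀ x ∈ D n, T x ∉ D n) {x : X}
    (hx : x ∈ greedySeparator T D) : T x ∉ greedySeparator T D := by
  intro hTx
  obtain ⟨m, hm⟩ := mem_iUnion.mp hx
  obtain ⟨n, hn⟩ := mem_iUnion.mp hTx
  rcases lt_trichotomy m n with hmn | rfl | hnm
  · exact disjoint_left.mp (disjoint_greedyPiece_of_lt hmn) hn (.inr (.inl ⟨x, hm, rfl⟩))
  · exact hD m x (greedyPiece_subset m hm) (greedyPiece_subset m hn)
  · exact disjoint_left.mp (disjoint_greedyPiece_of_lt hnm) hm (.inr (.inr hn))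

theorem iUnion_subset_greedySeparator_union :
    ⋃ n, D n ⊆ greedySeparator T D ∪ (T '' greedySeparator T D ∪ T ⁻¹' greedySeparator T D) := by
  refine iUnion_subset fun n x hx => ?_
  by_cases hxA : x ∈ greedyPiece T D n
  · exact .inl (mem_iUnion_of_mem n hxA)
  · have hpiece (k : ℕ) : greedyPiece T D k ⊆ greedySeparator T D := subset_iUnion _ k
    rw [greedyPiece, mem_sdiff, not_and_not_right] at hxA
    obtain ⟨k, hk⟩ := mem_iUnion.mp (hxA hx)
    exact union_subset_union (hpiece k)
      (union_subset_union (image_mono (hpiece k)) (preimage_mono (hpiece k))) hk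

theorem measurableSet_greedyPiece [MeasurableSpace X] (hT : MeasurableEmbedding T)
    (hD : ∀ n, MeasurableSet (D n)) (n : ℕ) : MeasurableSet (greedyPiece T D n) := by
  induction n using Nat.strong_induction_on with
  | _ n ih =>
    rw [greedyPiece]
    exact (hD n).diff <| MeasurableSet.iUnion fun k =>
      (ih k k.isLt).union
        ((hT.measurableSet_image' (ih k k.isLt)).union (hT.measurable (ih k k.isLt)))

theorem measurableSet_greedySeparator [MeasurableSpace X] (hT : MeasurableEmbedding T)
    (hD : ∀ n, MeasurableSet (D n)) : MeasurableSet (greedySeparator T D) :=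
  .iUnion (measurableSet_greedyPiece hT hD)

end Greedy

theorem disjoint_image_union_preimage_of_forall_apply_notMem {T : X → X} {A : Set X}
    (hA : ∀ x ∈ A, T x ∉ A) : Disjoint A (T '' A ∪ T ⁻¹' A) := by
  rw [disjoint_union_right]
  constructor
  · rw [disjoint_left]
    rintro _ hTx ⟨x, hx, rfl⟩
    exact hA x hx hTx
  · exact disjoint_left.mpr hA

theorem MeasurableSpace.exists_measurableSet_seq_mem_notMem_of_ne [MeasurableSpace X]
    [MeasurableSpace.CountablySeparated X] :
    ∃ B : ℕ → Set X, (∀ n, MeasurableSet (B n)) ∧ ∀ x y, x ≠ y → ∃ n, x ∈ B n ∧ y ∉ B n := by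
  obtain ⟨S, hSmeas, hS⟩ := exists_seq_separating X MeasurableSet.empty univ
  let B : ℕ → Set X := fun n => Sum.elim S (fun k => (S k)ᶜ) (Equiv.natSumNatEquivNat.symm n)
  refine ⟨B, fun n => ?_, fun x y hxy => ?_⟩
  · dsimp only [B]
    cases Equiv.natSumNatEquivNat.symm n with
    | inl k => exact hSmeas k
    | inr k => exact (hSmeas k).compl
  · obtain ⟨k, hk⟩ : ∃ k, ¬(x ∈ S k ↔ y ∈ S k) := by
      by_contra! h
      exact hxy (hS x trivial y trivial h)
    by_cases hx : x ∈ S k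
    · have hy : y ∉ S k := fun hy => hk (iff_of_true hx hy)
      exact ⟨Equiv.natSumNatEquivNat (.inl k), by simpa [B] using ⟨hx, hy⟩⟩
    · have hy : y ∈ S k := by_contra fun hy => hk (iff_of_false hx hy)
      exact ⟨Equiv.natSumNatEquivNat (.inr k), by simpa [B] using ⟨hx, hy⟩⟩

end

/-- A separator exists for every Borel bijection of a standard Borel space:
a Borel set `A ⊆ supp T` with `supp T = A ⊔ (T(A) ∪ T⁻¹(A))`. -/
theorem separator_exists {X : Type*} [MeasurableSpace X] [StandardBorelSpace X]
    (T : X → X) (hTmeas : Measurable T) (hTbij : Function.Bijective T) :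
    ∃ A : Set X, MeasurableSet A ∧ A ⊆ {x | T x ≠ x} ∧
      Disjoint A (T '' A ∪ T ⁻¹' A) ∧
      {x | T x ≠ x} = A ∪ (T '' A ∪ T ⁻¹' A) := by
  obtain ⟨B, hBmeas, hB⟩ := MeasurableSpace.exists_measurableSet_seq_mem_notMem_of_ne (X := X)
  set D : ℕ → Set X := fun n => B n \ T ⁻¹' B n
  have hD_meas (n : ℕ) : MeasurableSet (D n) := (hBmeas n).diff (hTmeas (hBmeas n))
  have hD_indep (n : ℕ) : ∀ x ∈ D n, T x ∉ D n := fun _ hx hTx => hx.2 hTx.1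
  have hsupp : {x | T x ≠ x} = ⋃ n, D n := by
    ext x
    simp only [mem_ofPred_eq, mem_iUnion, D, mem_sdiff, mem_preimage]
    refine ⟨fun hx => hB x (T x) hx.symm, ?_⟩
    rintro ⟨n, hx, hTx⟩ hfix
    exact hTx (by rwa [hfix])
  have hsupp_invariant : T '' {x | T x ≠ x} ∪ T ⁻¹' {x | T x ≠ x} ⊆ {x | T x ≠ x} :=
    union_subset (image_subset_iff.mpr fun _ => mt (hTbij.injective ·))
      fun _ hx h => hx (by rw [h]; exact h)
  set A := greedySeparator T D
  have hA : A ⊆ {x | T x ≠ x} := hsupp ▸ greedySeparator_subset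
  refine ⟨A, measurableSet_greedySeparator (hTmeas.measurableEmbedding hTbij.injective) hD_meas,
    hA, disjoint_image_union_preimage_of_forall_apply_notMem
      fun _ => apply_notMem_greedySeparator hD_indep, ?_⟩
  exact (hsupp ▸ iUnion_subset_greedySeparator_union).antisymm <|
    union_subset hA <| (union_subset_union (image_mono hA) (preimage_mono hA)).trans hsupp_invariant
end

section
/- Every full group G ≤ Aut(X,λ) is complete for the metric d̃(S,T) = d_μ(S,T) + d_μ(S⁻¹,T⁻¹), where d_μ(S,T) = μ({x : S(x) ≠ T(x)}) for any probability measure μ equivalent to λ. In particular G is closed in Aut(X,λ) for the uniform topology. -/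
open MeasureTheory Set Filter Topology Function
open scoped ENNReal symmDiff

variable {X : Type*}

def supp (T : X → X) : Set X := {x | T x ≠ x}

def IsMPBij [MeasurableSpace X] (ν : MeasureTheory.Measure X) (T : X → X) : Prop :=
  Measurable T ∧ Function.Bijective T ∧ MeasureTheory.MeasurePreserving T ν ν

def IsMPSubgroup [MeasurableSpace X] (ν : MeasureTheory.Measure X) (G : Set (X → X)) : Prop :=
  (∀ T ∈ G, IsMPBij ν T) ∧ id ∈ G ∧ (∀ T ∈ G, ∀ S ∈ G, T ∘ S ∈ G) ∧
    ∀ T ∈ G, ∃ S ∈ G, Function.LeftInverse S T ∧ Function.RightInverse S T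

def IsErgodicSet [MeasurableSpace X] (ν : MeasureTheory.Measure X) (G : Set (X → X)) : Prop :=
  ∀ A : Set X, MeasurableSet A → (∀ T ∈ G, ν ((T '' A) ∆ A) = 0) → ν A = 0 ∨ ν Aᶜ = 0

def IsFullGroup [MeasurableSpace X] (ν : MeasureTheory.Measure X) (G : Set (X → X)) : Prop :=
  IsMPSubgroup ν G ∧
  (∀ T S : X → X, T ∈ G → IsMPBij ν S → T =ᵐ[ν] S → S ∈ G) ∧
  ∀ (T : X → X) (Ts : ℕ → X → X) (A : ℕ → Set X),
    IsMPBij ν T → (∀ n, Ts n ∈ G) → (∀ n, MeasurableSet (A n)) →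
    Pairwise (Disjoint on A) → (⋃ n, A n) = Set.univ →
    (∀ n, ∀ x ∈ A n, T x = Ts n x) → T ∈ G

def WeakTendsto [MeasurableSpace X] (ν : MeasureTheory.Measure X)
    (T : ℕ → X → X) (S : X → X) : Prop :=
  ∀ B : Set X, MeasurableSet B → ν B < ⊤ →
    Filter.Tendsto (fun n => ν ((T n '' B) ∆ (S '' B))) Filter.atTop (nhds 0)

def fullGroupGen [MeasurableSpace X] (ν : MeasureTheory.Measure X) (T : X → X) :
    Set (X → X) :=
  {S | ∀ G : Set (X → X), IsFullGroup ν G → T ∈ G → S ∈ G}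

noncomputable def dmu [MeasurableSpace X] (μ : MeasureTheory.Measure X) (S T : X → X) :
    ℝ≥0∞ := μ {x | S x ≠ T x}

noncomputable def dtilde [MeasurableSpace X] [Nonempty X] (μ : MeasureTheory.Measure X)
    (S T : X → X) : ℝ≥0∞ :=
  dmu μ S T + dmu μ (Function.invFun S) (Function.invFun T)

set_option linter.unusedSectionVars false
set_option maxHeartbeats 1000000

section Aux
variable [MeasurableSpace X] [StandardBorelSpace X] [Nonempty X] {ν : Measure X} {T : X → X}

lemma IsMPBij.emb (hT : IsMPBij ν T) : MeasurableEmbedding T :=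
  hT.1.measurableEmbedding hT.2.1.1

lemma IsMPBij.image_eq_preimage (hT : IsMPBij ν T) (s : Set X) :
    T '' s = invFun T ⁻¹' s := by
  ext x
  constructor
  · rintro ⟨y, hy, rfl⟩; simpa [leftInverse_invFun hT.2.1.1 y] using hy
  · intro hx; exact ⟨invFun T x, hx, rightInverse_invFun hT.2.1.2 x⟩

lemma IsMPBij.measurable_inv (hT : IsMPBij ν T) : Measurable (invFun T) := by
  intro s hs
  rw [← hT.image_eq_preimage]
  exact hT.emb.measurableSet_image.2 hs

noncomputable def IsMPBij.equiv (hT : IsMPBij ν T) : X ≃ᵐ X where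
  toFun := T
  invFun := invFun T
  left_inv := leftInverse_invFun hT.2.1.1
  right_inv := rightInverse_invFun hT.2.1.2
  measurable_toFun := hT.1
  measurable_invFun := hT.measurable_inv

lemma IsMPBij.inv (hT : IsMPBij ν T) : IsMPBij ν (invFun T) := by
  refine ⟨hT.measurable_inv, ⟨(rightInverse_invFun hT.2.1.2).injective,
    (leftInverse_invFun hT.2.1.1).surjective⟩, ?_⟩
  have h : MeasurePreserving hT.equiv ν ν := hT.2.2
  exact h.symm hT.equiv

lemma IsMPBij.measure_image (hT : IsMPBij ν T) {s : Set X} (hs : MeasurableSet s) :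
    ν (T '' s) = ν s := by
  rw [hT.image_eq_preimage]
  exact hT.inv.2.2.measure_preimage hs.nullMeasurableSet

/-- A map assembled from countably many measure-preserving bijections on a
measurable partition is measurable. -/
lemma measurable_of_pieces {A : ℕ → Set X} {f : ℕ → X → X} {g : X → X}
    (hA : ∀ n, MeasurableSet (A n)) (hU : (⋃ n, A n) = Set.univ)
    (hf : ∀ n, Measurable (f n)) (hg : ∀ n, ∀ x ∈ A n, g x = f n x) :
    Measurable g := by
  intro s hs
  have : g ⁻¹' s = ⋃ n, A n ∩ f n ⁻¹' s := by
    ext x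
    have hx : ∃ n, x ∈ A n := by
      have := hU ▸ Set.mem_univ x
      simpa using (hU.symm ▸ Set.mem_univ x : x ∈ ⋃ n, A n)
    constructor
    · intro hgs
      obtain ⟨n, hn⟩ := hx
      exact Set.mem_iUnion.2 ⟨n, hn, by simpa [hg n x hn] using hgs⟩
    · intro hmem
      obtain ⟨n, hn, hns⟩ := Set.mem_iUnion.1 hmem
      simpa [hg n x hn] using hns
  rw [this]
  exact MeasurableSet.iUnion fun n => (hA n).inter ((hf n) hs)

/-- ... and if moreover it is bijective, it is an MP bijection. -/
lemma isMPBij_of_pieces {A : ℕ → Set X} {f : ℕ → X → X} {g : X → X}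
    (hA : ∀ n, MeasurableSet (A n)) (hAd : Pairwise (Disjoint on A))
    (hU : (⋃ n, A n) = Set.univ)
    (hf : ∀ n, IsMPBij ν (f n)) (hg : ∀ n, ∀ x ∈ A n, g x = f n x)
    (hbij : Function.Bijective g) : IsMPBij ν g := by
  have hmeas : Measurable g := measurable_of_pieces hA hU (fun n => (hf n).1) hg
  have himg : ∀ s : Set X, MeasurableSet s → ν (g '' s) = ν s := by
    intro s hs
    have h1 : g '' s = ⋃ n, f n '' (s ∩ A n) := by
      ext y
      constructor
      · rintro ⟨x, hxs, rfl⟩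
        have hx : x ∈ ⋃ n, A n := hU.symm ▸ Set.mem_univ x
        obtain ⟨n, hn⟩ := Set.mem_iUnion.1 hx
        exact Set.mem_iUnion.2 ⟨n, x, ⟨hxs, hn⟩, (hg n x hn).symm⟩
      · intro hy
        obtain ⟨n, x, ⟨hxs, hxA⟩, rfl⟩ := Set.mem_iUnion.1 hy
        exact ⟨x, hxs, hg n x hxA⟩
    have hms : ∀ n, MeasurableSet (f n '' (s ∩ A n)) := fun n =>
      (hf n).emb.measurableSet_image.2 (hs.inter (hA n))
    have hdisj : Pairwise (Disjoint on fun n => f n '' (s ∩ A n)) := by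
      intro i j hij
      refine Set.disjoint_left.2 ?_
      rintro y ⟨x, ⟨hxs, hxA⟩, rfl⟩ ⟨x', ⟨hxs', hxA'⟩, hEq⟩
      have : g x = g x' := by
        rw [hg i x hxA, hg j x' hxA', hEq]
      have hxx : x = x' := hbij.1 this
      subst hxx
      exact Set.disjoint_left.1 (hAd hij) hxA hxA'
    rw [h1, measure_iUnion hdisj hms]
    have h2 : ∀ n, ν (f n '' (s ∩ A n)) = ν (s ∩ A n) := fun n =>
      (hf n).measure_image (hs.inter (hA n))
    simp_rw [h2]
    have h3 : ν s = ∑' n, ν (s ∩ A n) := by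
      rw [← measure_iUnion (fun i j hij => (hAd hij).mono
        (by simp [Function.onFun]) (by simp [Function.onFun]))
        (fun n => hs.inter (hA n))]
      rw [← Set.inter_iUnion, hU, Set.inter_univ]
    exact h3.symm
  refine ⟨hmeas, hbij, hmeas, ?_⟩
  apply Measure.ext
  intro s hs
  rw [Measure.map_apply hmeas hs]
  have := himg _ (hmeas hs)
  rw [Set.image_preimage_eq s hbij.2] at this
  exact this.symm


lemma measurableSet_eqSet {f g : X → X} (hf : Measurable f) (hg : Measurable g) :
    MeasurableSet {x | f x = g x} := by
  letI := upgradeStandardBorel X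
  exact MeasureTheory.StronglyMeasurable.measurableSet_eq_fun
    hf.stronglyMeasurable hg.stronglyMeasurable


/-- Membership criterion: a measure-preserving bijection that a.e. agrees pointwise with
*some* element of a countable family from the full group belongs to the full group. -/
lemma mem_of_ae_exists_eq {G : Set (X → X)} (hG : IsFullGroup ν G)
    (hT : IsMPBij ν T) (Ss : ℕ → X → X) (hSs : ∀ n, Ss n ∈ G)
    (hae : ν {x | ∀ n, T x ≠ Ss n x} = 0) : T ∈ G := by
  classical
  set Tinv := invFun T with hTinv
  have hTi : Function.LeftInverse Tinv T := leftInverse_invFun hT.2.1.1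
  have hTr : Function.RightInverse Tinv T := rightInverse_invFun hT.2.1.2
  set E : Set X := ⋃ n, {x | T x = Ss n x} with hE
  have hEm : MeasurableSet E :=
    MeasurableSet.iUnion fun n => measurableSet_eqSet hT.1 (hG.1.1 _ (hSs n)).1
  have hEc : ν Eᶜ = 0 := by
    have : Eᶜ = {x | ∀ n, T x ≠ Ss n x} := by
      ext x; simp [hE]
    rw [this]; exact hae
  -- iterate maps
  set F : ℕ × ℕ → X → X := fun p x => T^[p.1] (Tinv^[p.2] x) with hF
  have hFmeas : ∀ p, Measurable (F p) := fun p =>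
    (hT.1.iterate p.1).comp (hT.measurable_inv.iterate p.2)
  have hFmp : ∀ p, MeasurePreserving (F p) ν ν := fun p =>
    (hT.2.2.iterate p.1).comp (hT.inv.2.2.iterate p.2)
  set N : Set X := ⋃ p : ℕ × ℕ, F p ⁻¹' Eᶜ with hN
  have hNm : MeasurableSet N := MeasurableSet.iUnion fun p => hFmeas p hEm.compl
  have hN0 : ν N = 0 := by
    refine measure_iUnion_null fun p => ?_
    rw [(hFmp p).measure_preimage hEm.compl.nullMeasurableSet]
    exact hEc
  have hEN : Eᶜ ⊆ N := fun x hx => Set.mem_iUnion.2 ⟨(0, 0), hx⟩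
  -- invariance of N under T
  have hTN : ∀ x, x ∈ N ↔ T x ∈ N := by
    intro x
    constructor
    · rintro hx
      obtain ⟨⟨n, m⟩, hp⟩ := Set.mem_iUnion.1 hx
      refine Set.mem_iUnion.2 ⟨(n, m + 1), ?_⟩
      show T^[n] (Tinv^[m+1] (T x)) ∈ Eᶜ
      rwa [Function.iterate_succ_apply, hTi x]
    · rintro hx
      obtain ⟨⟨n, m⟩, hp⟩ := Set.mem_iUnion.1 hx
      cases m with
      | zero =>
        refine Set.mem_iUnion.2 ⟨(n + 1, 0), ?_⟩
        show T^[n+1] (Tinv^[0] x) ∈ Eᶜ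
        have hp' : T^[n] (T x) ∈ Eᶜ := hp
        rw [Function.iterate_zero_apply, Function.iterate_succ_apply]
        exact hp'
      | succ m =>
        refine Set.mem_iUnion.2 ⟨(n, m), ?_⟩
        have hp' : T^[n] (Tinv^[m+1] (T x)) ∈ Eᶜ := hp
        rwa [Function.iterate_succ_apply, hTi x] at hp'
  -- the cut-and-paste modification
  set S : X → X := fun x => if x ∈ N then x else T x with hSdef
  have hS_inN : ∀ x ∈ N, S x = x := fun x hx => by simp [hSdef, hx]
  have hS_out : ∀ x ∉ N, S x = T x := fun x hx => by simp [hSdef, hx]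
  have hsub : {x | S x ≠ T x} ⊆ N := by
    intro x hx
    by_contra hxN
    exact hx (hS_out x hxN)
  have hSbij : Function.Bijective S := by
    constructor
    · intro a b hab
      by_cases ha : a ∈ N <;> by_cases hb : b ∈ N
      · rwa [hS_inN a ha, hS_inN b hb] at hab
      · rw [hS_inN a ha, hS_out b hb] at hab
        exact absurd (hab ▸ ha : T b ∈ N) (fun h => hb ((hTN b).2 h))
      · rw [hS_out a ha, hS_inN b hb] at hab
        exact absurd (hab ▸ hb : T a ∈ N) (fun h => ha ((hTN a).2 h))
      · rw [hS_out a ha, hS_out b hb] at hab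
        exact hT.2.1.1 hab
    · intro y
      by_cases hy : y ∈ N
      · exact ⟨y, hS_inN y hy⟩
      · refine ⟨Tinv y, ?_⟩
        have hxy : T (Tinv y) = y := hTr y
        have hx : Tinv y ∉ N := fun h => hy (hxy ▸ (hTN _).1 h)
        rw [hS_out _ hx, hxy]
  have hSmeas : Measurable S := by
    have : S = N.piecewise id T := by
      funext x
      by_cases hx : x ∈ N <;> simp [hSdef, hx, Set.piecewise, hx]
    rw [this]
    exact Measurable.piecewise hNm measurable_id hT.1
  have hSae : S =ᵐ[ν] T := by
    rw [Filter.EventuallyEq, ae_iff]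
    exact measure_mono_null (fun x hx => hsub hx) hN0
  have hSmp : MeasurePreserving S ν ν := by
    refine ⟨hSmeas, ?_⟩
    rw [Measure.map_congr hSae, hT.2.2.map_eq]
  have hSMPB : IsMPBij ν S := ⟨hSmeas, hSbij, hSmp⟩
  -- apply the cut-and-paste axiom of the full group
  set B : ℕ → Set X := fun k => Nᶜ ∩ {x | T x = Ss k x} with hB
  have hBm : ∀ k, MeasurableSet (B k) := fun k =>
    hNm.compl.inter (measurableSet_eqSet hT.1 (hG.1.1 _ (hSs k)).1)
  set A : ℕ → Set X := fun n => Nat.rec N (fun k _ => disjointed B k) n with hA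
  have hA0 : A 0 = N := rfl
  have hAs : ∀ k, A (k + 1) = disjointed B k := fun k => rfl
  set Ss' : ℕ → X → X := fun n => Nat.rec id (fun k _ => Ss k) n with hSs'
  have hSs'0 : Ss' 0 = id := rfl
  have hSs's : ∀ k, Ss' (k + 1) = Ss k := fun k => rfl
  have hSs'G : ∀ n, Ss' n ∈ G := by
    intro n
    match n with
    | 0 => exact hG.1.2.1
    | k + 1 => exact hSs k
  have hAm : ∀ n, MeasurableSet (A n) := by
    intro n
    match n with
    | 0 => exact hNm
    | k + 1 => exact MeasurableSet.disjointed hBm k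
  have hAd : Pairwise (Disjoint on A) := by
    have hBd : Pairwise (Disjoint on disjointed B) := disjoint_disjointed B
    intro i j hij
    match i, j with
    | 0, 0 => exact absurd rfl hij
    | 0, k + 1 =>
      refine Set.disjoint_left.2 fun x hx hx' => ?_
      exact ((disjointed_subset B k hx').1) hx
    | k + 1, 0 =>
      refine Set.disjoint_left.2 fun x hx hx' => ?_
      exact ((disjointed_subset B k hx).1) hx'
    | k + 1, l + 1 =>
      exact hBd (fun h => hij (by rw [h]))
  have hAU : (⋃ n, A n) = Set.univ := by
    rw [Set.eq_univ_iff_forall]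
    intro x
    by_cases hx : x ∈ N
    · exact Set.mem_iUnion.2 ⟨0, hx⟩
    · have hxE : x ∈ E := by
        by_contra hxE
        exact hx (hEN hxE)
      obtain ⟨k, hk⟩ := Set.mem_iUnion.1 hxE
      have hxB : x ∈ ⋃ k, B k := Set.mem_iUnion.2 ⟨k, hx, hk⟩
      rw [← iUnion_disjointed] at hxB
      obtain ⟨k', hk'⟩ := Set.mem_iUnion.1 hxB
      exact Set.mem_iUnion.2 ⟨k' + 1, hk'⟩
  have hAeq : ∀ n, ∀ x ∈ A n, S x = Ss' n x := by
    intro n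
    match n with
    | 0 => exact fun x hx => hS_inN x hx
    | k + 1 =>
      intro x hx
      have hxB : x ∈ B k := disjointed_subset B k hx
      rw [hS_out x hxB.1, hSs's k]
      exact hxB.2
  have hSG : S ∈ G := hG.2.2 S Ss' A hSMPB hSs'G hAm hAd hAU hAeq
  exact hG.2.1 S T hSG hT hSae
lemma dmu_triangle (μ : Measure X) (a b c : X → X) :
    dmu μ a c ≤ dmu μ a b + dmu μ b c := by
  have hsub : {x | a x ≠ c x} ⊆ {x | a x ≠ b x} ∪ {x | b x ≠ c x} := by
    intro x hx
    by_cases h : a x = b x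
    · exact Or.inr (fun h' => hx (h.trans h'))
    · exact Or.inl h
  exact le_trans (measure_mono hsub) (measure_union_le _ _)

lemma dtilde_triangle (μ : Measure X) (a b c : X → X) :
    dtilde μ a c ≤ dtilde μ a b + dtilde μ b c := by
  unfold dtilde
  calc dmu μ a c + dmu μ (invFun a) (invFun c)
      ≤ (dmu μ a b + dmu μ b c) +
        (dmu μ (invFun a) (invFun b) + dmu μ (invFun b) (invFun c)) :=
        add_le_add (dmu_triangle μ a b c) (dmu_triangle μ _ _ _)
    _ = _ := by ring

lemma stab_of_tail {W : ℕ → X → X} {x : X} {K : ℕ}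
    (h : ∀ k, K ≤ k → W k x = W (k+1) x) : ∀ k, K ≤ k → W k x = W K x := by
  intro k hk
  induction k with
  | zero =>
    have : K = 0 := Nat.le_zero.mp hk
    rw [this]
  | succ k ih =>
    rcases Nat.lt_or_ge K (k+1) with hlt | hge
    · have hKk : K ≤ k := Nat.lt_succ_iff.mp hlt
      rw [← h k hKk]
      exact ih hKk
    · have : K = k + 1 := le_antisymm hk hge
      rw [this]

lemma geom_ne_top : (∑' j : ℕ, (2⁻¹ : ℝ≥0∞) ^ j) ≠ ⊤ := by
  rw [ENNReal.tsum_geometric]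
  rw [ENNReal.one_sub_inv_two]
  simp

lemma stab_null (μ : Measure X) (W : ℕ → X → X)
    (hb : ∀ k, μ {x | W k x ≠ W (k+1) x} ≤ 2⁻¹ ^ k) :
    μ {x | ∃ K, ∀ k, K ≤ k → W k x = W K x}ᶜ = 0 := by
  set s : ℕ → Set X := fun k => {x | W k x ≠ W (k+1) x} with hs
  have hsum : (∑' k, μ (s k)) ≠ ⊤ := by
    refine ne_top_of_le_ne_top geom_ne_top (ENNReal.tsum_le_tsum hb)
  have hlim : μ (limsup s atTop) = 0 := measure_limsup_atTop_eq_zero hsum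
  refine measure_mono_null ?_ hlim
  intro x hx
  rw [mem_limsup_iff_frequently_mem, Filter.frequently_atTop]
  intro K
  by_contra hcon
  push_neg at hcon
  refine hx ⟨K, stab_of_tail fun k hk => ?_⟩
  by_contra hne
  exact hcon k hk hne

lemma tendsto_pow_mul_const (C : ℝ≥0∞) (hC : C ≠ ⊤) :
    Filter.Tendsto (fun k : ℕ => (2⁻¹ : ℝ≥0∞) ^ k * C) Filter.atTop (nhds 0) := by
  have h1 : Filter.Tendsto (fun k : ℕ => (2⁻¹ : ℝ≥0∞) ^ k) Filter.atTop (nhds 0) :=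
    ENNReal.tendsto_pow_atTop_nhds_zero_of_lt_one (by
      rw [ENNReal.inv_lt_one]; exact ENNReal.one_lt_two)
  have := ENNReal.Tendsto.mul_const h1 (Or.inr hC)
  simpa using this

end Aux

/-- Every full group is complete for the bi-uniform metric
`d̃(S,T) = dμ(S,T) + dμ(S⁻¹,T⁻¹)`, for any probability measure `μ` equivalent to `ν`;
in particular it is closed in `Aut(X,ν)` for the uniform topology. -/
theorem fullGroup_complete_biuniform [MeasurableSpace X] [StandardBorelSpace X] [Nonempty X]
    (ν μ : MeasureTheory.Measure X) [SigmaFinite ν] [IsProbabilityMeasure μ]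
    (h1 : μ ≪ ν) (h2 : ν ≪ μ)
    (G : Set (X → X)) (hG : IsFullGroup ν G) :
    (∀ Ts : ℕ → X → X, (∀ n, Ts n ∈ G) →
      (∀ ε : ℝ≥0∞, 0 < ε → ∃ N : ℕ, ∀ m ≥ N, ∀ n ≥ N, dtilde μ (Ts m) (Ts n) < ε) →
      ∃ T ∈ G, Filter.Tendsto (fun n => dtilde μ (Ts n) T) Filter.atTop (nhds 0)) ∧
    (∀ Ts : ℕ → X → X, (∀ n, Ts n ∈ G) → ∀ T : X → X, IsMPBij ν T →
      Filter.Tendsto (fun n => dmu μ (Ts n) T) Filter.atTop (nhds 0) → T ∈ G) := by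
  classical
  constructor
  · intro Ts hTs hC
    -- Cauchy indices
    have hhalf : ∀ k : ℕ, (0 : ℝ≥0∞) < 2⁻¹ ^ k := fun k =>
      ENNReal.pow_pos (by simp) k
    choose c hc using fun k => hC (2⁻¹ ^ k) (hhalf k)
    set nk : ℕ → ℕ := fun k => Nat.rec (c 0) (fun k ih => max (ih + 1) (c (k + 1))) k
      with hnk
    have hnk_succ : ∀ k, nk (k + 1) = max (nk k + 1) (c (k + 1)) := fun k => rfl
    have hnk_mono : Monotone nk := monotone_nat_of_le_succ fun k => by
      rw [hnk_succ]; exact le_trans (Nat.le_succ _) (le_max_left _ _)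
    have hnk_ge : ∀ k, c k ≤ nk k := by
      intro k
      cases k with
      | zero => exact le_rfl
      | succ k => rw [hnk_succ]; exact le_max_right _ _
    set U : ℕ → X → X := fun k => Ts (nk k) with hU
    set V : ℕ → X → X := fun k => invFun (Ts (nk k)) with hV
    have hUG : ∀ k, U k ∈ G := fun k => hTs (nk k)
    have hUB : ∀ k, IsMPBij ν (U k) := fun k => hG.1.1 _ (hUG k)
    have hVB : ∀ k, IsMPBij ν (V k) := fun k => (hUB k).inv
    have hUV_l : ∀ k x, V k (U k x) = x := fun k x =>
      leftInverse_invFun (hUB k).2.1.1 x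
    have hUV_r : ∀ k x, U k (V k x) = x := fun k x =>
      rightInverse_invFun (hUB k).2.1.2 x
    have hdt : ∀ k j, k ≤ j → dtilde μ (U k) (U j) < 2⁻¹ ^ k := fun k j hkj =>
      hc k (nk k) (hnk_ge k) (nk j) (le_trans (hnk_ge k) (hnk_mono hkj))
    have hdtsplit : ∀ k j, dtilde μ (U k) (U j) = dmu μ (U k) (U j) + dmu μ (V k) (V j) :=
      fun k j => rfl
    have hdU : ∀ k, μ {x | U k x ≠ U (k+1) x} ≤ 2⁻¹ ^ k := by
      intro k
      have := (hdt k (k+1) (Nat.le_succ k)).le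
      exact le_trans (le_trans le_self_add (hdtsplit k (k+1)).ge) this
    have hdV : ∀ k, μ {x | V k x ≠ V (k+1) x} ≤ 2⁻¹ ^ k := by
      intro k
      have := (hdt k (k+1) (Nat.le_succ k)).le
      exact le_trans (le_trans le_add_self (hdtsplit k (k+1)).ge) this
    -- stabilization sets
    set Q : X → ℕ → Prop := fun x K => ∀ k, K ≤ k → U k x = U K x with hQ
    set Qi : X → ℕ → Prop := fun x K => ∀ k, K ≤ k → V k x = V K x with hQi
    have hQm : ∀ K, MeasurableSet {x | Q x K} := by
      intro K
      have heq : {x | Q x K} = ⋂ k, {x | K ≤ k → U k x = U K x} := by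
        ext x; simp [hQ, Set.mem_iInter]
      rw [heq]
      refine MeasurableSet.iInter fun k => ?_
      by_cases hk : K ≤ k
      · simp only [hk, true_implies]
        exact measurableSet_eqSet (hUB k).1 (hUB K).1
      · simp [hk]
    have hQim : ∀ K, MeasurableSet {x | Qi x K} := by
      intro K
      have heq : {x | Qi x K} = ⋂ k, {x | K ≤ k → V k x = V K x} := by
        ext x; simp [hQi, Set.mem_iInter]
      rw [heq]
      refine MeasurableSet.iInter fun k => ?_
      by_cases hk : K ≤ k
      · simp only [hk, true_implies]
        exact measurableSet_eqSet (hVB k).1 (hVB K).1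
      · simp [hk]
    set D : Set X := {x | ∃ K, Q x K} with hD
    set Di : Set X := {x | ∃ K, Qi x K} with hDi
    have hDm : MeasurableSet D := by
      have : D = ⋃ K, {x | Q x K} := by ext x; simp [hD]
      rw [this]; exact MeasurableSet.iUnion hQm
    have hDim : MeasurableSet Di := by
      have : Di = ⋃ K, {x | Qi x K} := by ext x; simp [hDi]
      rw [this]; exact MeasurableSet.iUnion hQim
    have hDc : μ Dᶜ = 0 := stab_null μ U hdU
    have hDic : μ Diᶜ = 0 := stab_null μ V hdV
    set B0 : Set X := Dᶜ ∪ Diᶜ with hB0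
    have hB0m : MeasurableSet B0 := hDm.compl.union hDim.compl
    have hB0ν : ν B0 = 0 := h2 (measure_union_null hDc hDic)
    -- the stabilization maps
    set φ : X → X := fun x => if hx : ∃ K, Q x K then U (Nat.find hx) x else x with hφ
    set ψ : X → X := fun x => if hx : ∃ K, Qi x K then V (Nat.find hx) x else x with hψ
    have hφ_val : ∀ x (hx : ∃ K, Q x K), φ x = U (Nat.find hx) x := fun x hx => dif_pos hx
    have hφ_out : ∀ x, ¬(∃ K, Q x K) → φ x = x := fun x hx => dif_neg hx
    have hψ_val : ∀ x (hx : ∃ K, Qi x K), ψ x = V (Nat.find hx) x := fun x hx => dif_pos hx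
    have hψ_out : ∀ x, ¬(∃ K, Qi x K) → ψ x = x := fun x hx => dif_neg hx
    -- first-stabilization pieces
    set P : ℕ → Set X := fun K => {x | Q x K ∧ ∀ J, J < K → ¬ Q x J} with hP
    set Pi : ℕ → Set X := fun K => {x | Qi x K ∧ ∀ J, J < K → ¬ Qi x J} with hPi
    have hPm : ∀ K, MeasurableSet (P K) := by
      intro K
      have heq : P K = {x | Q x K} ∩ ⋂ J, {x | J < K → ¬ Q x J} := by
        ext x; simp [hP, Set.mem_iInter]
      rw [heq]
      refine (hQm K).inter (MeasurableSet.iInter fun J => ?_)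
      by_cases hJ : J < K
      · simp only [hJ, true_implies]
        exact (hQm J).compl
      · simp [hJ]
    have hPim : ∀ K, MeasurableSet (Pi K) := by
      intro K
      have heq : Pi K = {x | Qi x K} ∩ ⋂ J, {x | J < K → ¬ Qi x J} := by
        ext x; simp [hPi, Set.mem_iInter]
      rw [heq]
      refine (hQim K).inter (MeasurableSet.iInter fun J => ?_)
      by_cases hJ : J < K
      · simp only [hJ, true_implies]
        exact (hQim J).compl
      · simp [hJ]
    have hPd : Pairwise (Disjoint on P) := by
      intro i j hij
      rcases Nat.lt_or_ge i j with h | h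
      · exact Set.disjoint_left.2 fun x hxi hxj => hxj.2 i h hxi.1
      · have h' : j < i := lt_of_le_of_ne h (Ne.symm hij)
        exact Set.disjoint_left.2 fun x hxi hxj => hxi.2 j h' hxj.1
    have hP_find : ∀ x (hx : ∃ K, Q x K), x ∈ P (Nat.find hx) := fun x hx =>
      ⟨Nat.find_spec hx, fun J hJ => Nat.find_min hx hJ⟩
    have hPi_find : ∀ x (hx : ∃ K, Qi x K), x ∈ Pi (Nat.find hx) := fun x hx =>
      ⟨Nat.find_spec hx, fun J hJ => Nat.find_min hx hJ⟩
    have hφP : ∀ K, ∀ x ∈ P K, φ x = U K x := by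
      intro K x hxP
      have hx : ∃ K, Q x K := ⟨K, hxP.1⟩
      rw [hφ_val x hx]
      exact (Nat.find_spec hx K (Nat.find_min' hx hxP.1)).symm
    have hψPi : ∀ K, ∀ x ∈ Pi K, ψ x = V K x := by
      intro K x hxP
      have hx : ∃ K, Qi x K := ⟨K, hxP.1⟩
      rw [hψ_val x hx]
      exact (Nat.find_spec hx K (Nat.find_min' hx hxP.1)).symm
    -- measurability of φ and ψ
    have hφmeas : Measurable φ := by
      refine measurable_of_pieces (A := fun n => Nat.rec Dᶜ (fun K _ => P K) n)
        (f := fun n => Nat.rec id (fun K _ => U K) n) ?_ ?_ ?_ ?_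
      · intro n
        match n with
        | 0 => exact hDm.compl
        | K + 1 => exact hPm K
      · rw [Set.eq_univ_iff_forall]
        intro x
        by_cases hx : ∃ K, Q x K
        · exact Set.mem_iUnion.2 ⟨Nat.find hx + 1, hP_find x hx⟩
        · exact Set.mem_iUnion.2 ⟨0, hx⟩
      · intro n
        match n with
        | 0 => exact measurable_id
        | K + 1 => exact (hUB K).1
      · intro n
        match n with
        | 0 => exact fun x hx => hφ_out x hx
        | K + 1 => exact fun x hx => hφP K x hx
    have hψmeas : Measurable ψ := by
      refine measurable_of_pieces (A := fun n => Nat.rec Diᶜ (fun K _ => Pi K) n)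
        (f := fun n => Nat.rec id (fun K _ => V K) n) ?_ ?_ ?_ ?_
      · intro n
        match n with
        | 0 => exact hDim.compl
        | K + 1 => exact hPim K
      · rw [Set.eq_univ_iff_forall]
        intro x
        by_cases hx : ∃ K, Qi x K
        · exact Set.mem_iUnion.2 ⟨Nat.find hx + 1, hPi_find x hx⟩
        · exact Set.mem_iUnion.2 ⟨0, hx⟩
      · intro n
        match n with
        | 0 => exact measurable_id
        | K + 1 => exact (hVB K).1
      · intro n
        match n with
        | 0 => exact fun x hx => hψ_out x hx
        | K + 1 => exact fun x hx => hψPi K x hx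
    -- preimages of null sets under φ, ψ are null
    have hφpre : ∀ C : Set X, MeasurableSet C → ν C = 0 → ν (φ ⁻¹' C) = 0 := by
      intro C hCm hC0
      have hsub : φ ⁻¹' C ⊆ (Dᶜ ∩ C) ∪ ⋃ K, (P K ∩ U K ⁻¹' C) := by
        intro x hx
        by_cases hxD : ∃ K, Q x K
        · right
          refine Set.mem_iUnion.2 ⟨Nat.find hxD, hP_find x hxD, ?_⟩
          show U (Nat.find hxD) x ∈ C
          rw [← hφ_val x hxD]
          exact hx
        · exact Or.inl ⟨hxD, (hφ_out x hxD) ▸ hx⟩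
      refine measure_mono_null hsub (measure_union_null ?_ (measure_iUnion_null fun K => ?_))
      · exact measure_mono_null Set.inter_subset_right hC0
      · refine measure_mono_null Set.inter_subset_right ?_
        rw [(hUB K).2.2.measure_preimage hCm.nullMeasurableSet]
        exact hC0
    have hψpre : ∀ C : Set X, MeasurableSet C → ν C = 0 → ν (ψ ⁻¹' C) = 0 := by
      intro C hCm hC0
      have hsub : ψ ⁻¹' C ⊆ (Diᶜ ∩ C) ∪ ⋃ K, (Pi K ∩ V K ⁻¹' C) := by
        intro x hx
        by_cases hxD : ∃ K, Qi x K
        · right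
          refine Set.mem_iUnion.2 ⟨Nat.find hxD, hPi_find x hxD, ?_⟩
          show V (Nat.find hxD) x ∈ C
          rw [← hψ_val x hxD]
          exact hx
        · exact Or.inl ⟨hxD, (hψ_out x hxD) ▸ hx⟩
      refine measure_mono_null hsub (measure_union_null ?_ (measure_iUnion_null fun K => ?_))
      · exact measure_mono_null Set.inter_subset_right hC0
      · refine measure_mono_null Set.inter_subset_right ?_
        rw [(hVB K).2.2.measure_preimage hCm.nullMeasurableSet]
        exact hC0
    -- words in φ, ψ, and the saturated null set
    set fb : Bool → X → X := fun b => if b then φ else ψ with hfb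
    set cw : List Bool → X → X :=
      fun l => List.rec id (fun b _ ih => ih ∘ fb b) l with hcw
    have hcw_cons : ∀ b l, cw (b :: l) = cw l ∘ fb b := fun b l => rfl
    have hfbpre : ∀ b (C : Set X), MeasurableSet C → ν C = 0 →
        MeasurableSet (fb b ⁻¹' C) ∧ ν (fb b ⁻¹' C) = 0 := by
      intro b C hCm hC0
      cases b
      · exact ⟨hψmeas hCm, hψpre C hCm hC0⟩
      · exact ⟨hφmeas hCm, hφpre C hCm hC0⟩
    have hcwpre : ∀ (l : List Bool) (C : Set X), MeasurableSet C → ν C = 0 →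
        MeasurableSet (cw l ⁻¹' C) ∧ ν (cw l ⁻¹' C) = 0 := by
      intro l
      induction l with
      | nil => intro C hCm hC0; exact ⟨hCm, hC0⟩
      | cons b l ih =>
        intro C hCm hC0
        rw [hcw_cons, Set.preimage_comp]
        obtain ⟨h1', h2'⟩ := ih C hCm hC0
        exact hfbpre b _ h1' h2'
    set N' : Set X := ⋃ l : List Bool, cw l ⁻¹' B0 with hN'
    have hN'm : MeasurableSet N' :=
      MeasurableSet.iUnion fun l => (hcwpre l B0 hB0m hB0ν).1
    have hN'0 : ν N' = 0 := measure_iUnion_null fun l => (hcwpre l B0 hB0m hB0ν).2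
    have hN'μ : μ N' = 0 := h1 hN'0
    set W : Set X := N'ᶜ with hW
    have hWD : ∀ x ∈ W, (∃ K, Q x K) ∧ (∃ K, Qi x K) := by
      intro x hx
      constructor
      · by_contra hcon
        exact hx (Set.mem_iUnion.2 ⟨[], Or.inl hcon⟩)
      · by_contra hcon
        exact hx (Set.mem_iUnion.2 ⟨[], Or.inr hcon⟩)
    have hWφ : ∀ x ∈ W, φ x ∈ W := by
      intro x hx hmem
      obtain ⟨l, hl⟩ := Set.mem_iUnion.1 hmem
      refine hx (Set.mem_iUnion.2 ⟨true :: l, ?_⟩)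
      show (cw l ∘ fb true) x ∈ B0
      simpa [hfb] using hl
    have hWψ : ∀ x ∈ W, ψ x ∈ W := by
      intro x hx hmem
      obtain ⟨l, hl⟩ := Set.mem_iUnion.1 hmem
      refine hx (Set.mem_iUnion.2 ⟨false :: l, ?_⟩)
      show (cw l ∘ fb false) x ∈ B0
      simpa [hfb] using hl
    -- mutual inversion on the good set
    have hφDi : ∀ x (hx : ∃ K, Q x K), (∃ K, Qi (φ x) K) ∧ ψ (φ x) = x := by
      intro x hx
      have hspec : Q x (Nat.find hx) := Nat.find_spec hx
      have hVx : ∀ k, Nat.find hx ≤ k → V k (φ x) = x := by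
        intro k hk
        rw [hφ_val x hx, ← hspec k hk]
        exact hUV_l k x
      have hQi0 : Qi (φ x) (Nat.find hx) := fun k hk => by
        rw [hVx k hk, hVx (Nat.find hx) le_rfl]
      refine ⟨⟨Nat.find hx, hQi0⟩, ?_⟩
      have hy : ∃ K, Qi (φ x) K := ⟨Nat.find hx, hQi0⟩
      rw [hψ_val (φ x) hy]
      have hJspec : Qi (φ x) (Nat.find hy) := Nat.find_spec hy
      have h1' : V (max (Nat.find hy) (Nat.find hx)) (φ x) = V (Nat.find hy) (φ x) :=
        hJspec _ (le_max_left _ _)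
      have h2' : V (max (Nat.find hy) (Nat.find hx)) (φ x) = x :=
        hVx _ (le_max_right _ _)
      rw [← h1', h2']
    have hψD : ∀ x (hx : ∃ K, Qi x K), (∃ K, Q (ψ x) K) ∧ φ (ψ x) = x := by
      intro x hx
      have hspec : Qi x (Nat.find hx) := Nat.find_spec hx
      have hUx : ∀ k, Nat.find hx ≤ k → U k (ψ x) = x := by
        intro k hk
        rw [hψ_val x hx, ← hspec k hk]
        exact hUV_r k x
      have hQ0 : Q (ψ x) (Nat.find hx) := fun k hk => by
        rw [hUx k hk, hUx (Nat.find hx) le_rfl]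
      refine ⟨⟨Nat.find hx, hQ0⟩, ?_⟩
      have hy : ∃ K, Q (ψ x) K := ⟨Nat.find hx, hQ0⟩
      rw [hφ_val (ψ x) hy]
      have hJspec : Q (ψ x) (Nat.find hy) := Nat.find_spec hy
      have h1' : U (max (Nat.find hy) (Nat.find hx)) (ψ x) = U (Nat.find hy) (ψ x) :=
        hJspec _ (le_max_left _ _)
      have h2' : U (max (Nat.find hy) (Nat.find hx)) (ψ x) = x :=
        hUx _ (le_max_right _ _)
      rw [← h1', h2']
    -- the limit transformation
    set T : X → X := fun x => if x ∈ W then φ x else x with hT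
    have hTin : ∀ x ∈ W, T x = φ x := fun x hx => if_pos hx
    have hTout : ∀ x ∉ W, T x = x := fun x hx => if_neg hx
    have hTbij : Function.Bijective T := by
      constructor
      · intro a b hab
        by_cases ha : a ∈ W <;> by_cases hb : b ∈ W
        · rw [hTin a ha, hTin b hb] at hab
          calc a = ψ (φ a) := (hφDi a (hWD a ha).1).2.symm
            _ = ψ (φ b) := by rw [hab]
            _ = b := (hφDi b (hWD b hb).1).2
        · rw [hTin a ha, hTout b hb] at hab
          exact absurd (hab ▸ hWφ a ha) hb
        · rw [hTout a ha, hTin b hb] at hab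
          exact absurd (hab.symm ▸ hWφ b hb) ha
        · rwa [hTout a ha, hTout b hb] at hab
      · intro y
        by_cases hy : y ∈ W
        · refine ⟨ψ y, ?_⟩
          rw [hTin _ (hWψ y hy)]
          exact (hψD y (hWD y hy).2).2
        · exact ⟨y, hTout y hy⟩
    have hTB : IsMPBij ν T := by
      refine isMPBij_of_pieces (A := fun n => Nat.rec Wᶜ (fun K _ => W ∩ P K) n)
        (f := fun n => Nat.rec id (fun K _ => U K) n) ?_ ?_ ?_ ?_ ?_ hTbij
      · intro n
        match n with
        | 0 => exact hN'm.compl.compl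
        | K + 1 => exact (hN'm.compl).inter (hPm K)
      · intro i j hij
        match i, j with
        | 0, 0 => exact absurd rfl hij
        | 0, K + 1 =>
          exact Set.disjoint_left.2 fun x hx hx' => hx hx'.1
        | K + 1, 0 =>
          exact Set.disjoint_left.2 fun x hx hx' => hx' hx.1
        | K + 1, J + 1 =>
          have := hPd (i := K) (j := J) (fun h => hij (by rw [h]))
          exact this.mono (fun x hx => hx.2 : W ∩ P K ≤ P K) (fun x hx => hx.2 : W ∩ P J ≤ P J)
      · rw [Set.eq_univ_iff_forall]
        intro x
        by_cases hx : x ∈ W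
        · exact Set.mem_iUnion.2
            ⟨Nat.find (hWD x hx).1 + 1, hx, hP_find x (hWD x hx).1⟩
        · exact Set.mem_iUnion.2 ⟨0, hx⟩
      · intro n
        match n with
        | 0 => exact ⟨measurable_id, Function.bijective_id, MeasurePreserving.id ν⟩
        | K + 1 => exact hUB K
      · intro n
        match n with
        | 0 => exact fun x hx => hTout x hx
        | K + 1 => exact fun x hx => by rw [hTin x hx.1]; exact hφP K x hx.2
    have hTG : T ∈ G := by
      refine mem_of_ae_exists_eq hG hTB U hUG ?_
      refine measure_mono_null ?_ hN'0
      intro x hx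
      by_contra hxN
      have hxW : x ∈ W := hxN
      have hxD := (hWD x hxW).1
      exact hx (Nat.find hxD) (by rw [hTin x hxW, hφ_val x hxD])
    -- quantitative convergence
    set geo : ℝ≥0∞ := ∑' j : ℕ, (2⁻¹ : ℝ≥0∞) ^ j with hgeo
    have htail : ∀ (s : ℕ → Set X), (∀ j, μ (s j) ≤ 2⁻¹ ^ j) →
        ∀ k, μ (⋃ j : ℕ, s (k + j)) ≤ 2⁻¹ ^ k * geo := by
      intro s hs k
      calc μ (⋃ j : ℕ, s (k + j)) ≤ ∑' j : ℕ, μ (s (k + j)) := measure_iUnion_le _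
        _ ≤ ∑' j : ℕ, 2⁻¹ ^ (k + j) := ENNReal.tsum_le_tsum fun j => hs (k + j)
        _ = 2⁻¹ ^ k * geo := by
            simp_rw [pow_add]
            rw [ENNReal.tsum_mul_left]
    have hUT : ∀ k, dmu μ (U k) T ≤ 2⁻¹ ^ k * geo := by
      intro k
      have hsub : {x | U k x ≠ T x} ⊆
          N' ∪ ⋃ j : ℕ, {x | U (k + j) x ≠ U (k + j + 1) x} := by
        intro x hx
        by_cases hxW : x ∈ W
        · right
          by_contra hcon
          simp only [Set.mem_iUnion, Set.mem_setOf_eq, not_exists, not_not] at hcon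
          have hQk : Q x k := by
            apply stab_of_tail
            intro m hm
            have := hcon (m - k)
            rwa [Nat.add_sub_cancel' hm] at this
          have hxD : ∃ K, Q x K := ⟨k, hQk⟩
          apply hx
          rw [hTin x hxW, hφ_val x hxD]
          exact Nat.find_spec hxD k (Nat.find_min' hxD hQk)
        · left
          simpa [hW] using hxW
      refine le_trans (measure_mono hsub) (le_trans (measure_union_le _ _) ?_)
      rw [hN'μ, zero_add]
      exact htail (fun j => {x | U j x ≠ U (j + 1) x}) hdU k
    have hinvT_in : ∀ y ∈ W, invFun T y = ψ y := by
      intro y hy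
      have h1' : T (ψ y) = y := by
        rw [hTin _ (hWψ y hy)]
        exact (hψD y (hWD y hy).2).2
      have h2' := leftInverse_invFun hTbij.1 (ψ y)
      rw [h1'] at h2'
      exact h2'
    have hVT : ∀ k, dmu μ (V k) (invFun T) ≤ 2⁻¹ ^ k * geo := by
      intro k
      have hsub : {x | V k x ≠ invFun T x} ⊆
          N' ∪ ⋃ j : ℕ, {x | V (k + j) x ≠ V (k + j + 1) x} := by
        intro x hx
        by_cases hxW : x ∈ W
        · right
          by_contra hcon
          simp only [Set.mem_iUnion, Set.mem_setOf_eq, not_exists, not_not] at hcon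
          have hQk : Qi x k := by
            apply stab_of_tail
            intro m hm
            have := hcon (m - k)
            rwa [Nat.add_sub_cancel' hm] at this
          have hxD : ∃ K, Qi x K := ⟨k, hQk⟩
          apply hx
          rw [hinvT_in x hxW, hψ_val x hxD]
          exact Nat.find_spec hxD k (Nat.find_min' hxD hQk)
        · left
          simpa [hW] using hxW
      refine le_trans (measure_mono hsub) (le_trans (measure_union_le _ _) ?_)
      rw [hN'μ, zero_add]
      exact htail (fun j => {x | V j x ≠ V (j + 1) x}) hdV k
    have hUTt : ∀ k, dtilde μ (U k) T ≤ 2⁻¹ ^ k * (geo + geo) := by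
      intro k
      have hEq : dtilde μ (U k) T = dmu μ (U k) T + dmu μ (V k) (invFun T) := rfl
      rw [hEq, mul_add]
      exact add_le_add (hUT k) (hVT k)
    refine ⟨T, hTG, ?_⟩
    rw [ENNReal.tendsto_nhds_zero]
    intro ε hε
    have hgeone : geo ≠ ⊤ := geom_ne_top
    have hCstne : (1 + (geo + geo)) ≠ ⊤ := by
      simp [ENNReal.add_ne_top, hgeone]
    obtain ⟨k, hkε⟩ :=
      ((tendsto_pow_mul_const (1 + (geo + geo)) hCstne).eventually_lt_const hε).exists
    rw [Filter.eventually_atTop]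
    refine ⟨c k, fun n hn => ?_⟩
    have h1' : dtilde μ (Ts n) (U k) ≤ 2⁻¹ ^ k :=
      (hc k n hn (nk k) (hnk_ge k)).le
    calc dtilde μ (Ts n) T
        ≤ dtilde μ (Ts n) (U k) + dtilde μ (U k) T := dtilde_triangle μ _ _ _
      _ ≤ 2⁻¹ ^ k + 2⁻¹ ^ k * (geo + geo) := add_le_add h1' (hUTt k)
      _ = 2⁻¹ ^ k * (1 + (geo + geo)) := by ring
      _ ≤ ε := hkε.le
  · intro Ts hTs T hT htend
    refine mem_of_ae_exists_eq hG hT Ts hTs ?_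
    have hμ : μ {x | ∀ n, T x ≠ Ts n x} = 0 := by
      have hb : ∀ n, μ {x | ∀ m, T x ≠ Ts m x} ≤ dmu μ (Ts n) T := by
        intro n
        apply measure_mono
        intro x hx
        exact fun h => hx n h.symm
      have : μ {x | ∀ m, T x ≠ Ts m x} ≤ 0 :=
        ge_of_tendsto htend (Filter.Eventually.of_forall hb)
      exact le_antisymm this zero_le
    exact h2 hμ
end
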